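/- Let M = M₁ ×_{f₁,f₂} M₂ be a doubly warped product. Suppose ζᵢ is a conformal vector field on Mᵢ with conformal factor ρᵢ for i = 1,2, and ρ₁ − ρ₂ = 2[ζ₁(ln f₁) − ζ₂(ln f₂)]. Then ζ = ζ₁ + ζ₂ is a conformal vector field on M with conformal factor ρ₁ + 2ζ₂(ln f₂). -/

import Mathlib

noncomputable section

open scoped BigOperators

/-- The model space of an `n`-dimensional manifold (global chart). -/
abbrev E (n : ℕ) := Fin n → ℝ

section Core
variable {α : Type*} [NormedAddCommGroup α] [NormedSpace ℝ α]

/-- Directional derivative `X(φ)` of a scalar function along a vector field. -/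
def dd (X : α → α) (φ : α → ℝ) (p : α) : ℝ := fderiv ℝ φ p (X p)

/-- Lie bracket `[X,Y]` of vector fields. -/
def br (X Y : α → α) (p : α) : α := fderiv ℝ Y p (X p) - fderiv ℝ X p (Y p)

/-- Lie derivative of a metric: `(L_ζ g)(X,Y)(p)`. -/
def lieD (g : α → α → α → ℝ) (ζ X Y : α → α) (p : α) : ℝ :=
  dd ζ (fun q => g q (X q) (Y q)) p - g p (br ζ X p) (Y p) - g p (X p) (br ζ Y p)

/-- `g` is a smooth field of symmetric bilinear forms. -/
structure IsMetric (g : α → α → α → ℝ) : Prop where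
  linL : ∀ p w, IsLinearMap ℝ (fun v => g p v w)
  linR : ∀ p v, IsLinearMap ℝ (g p v)
  symm : ∀ p v w, g p v w = g p w v
  smooth : ∀ v w, ContDiff ℝ (⊤ : ℕ∞) (fun p => g p v w)

/-- Positive definiteness (Riemannian metric). -/
def PosDef (g : α → α → α → ℝ) : Prop := ∀ p v, v ≠ 0 → 0 < g p v v

/-- `ζ` is a conformal vector field for `g` with conformal factor `ρ`. -/
def IsConformal (g : α → α → α → ℝ) (ζ : α → α) (ρ : α → ℝ) : Prop :=
  ∀ X Y : α → α, ContDiff ℝ (⊤ : ℕ∞) X → ContDiff ℝ (⊤ : ℕ∞) Y → ∀ p,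
    lieD g ζ X Y p = ρ p * g p (X p) (Y p)

/-- Conformality restricted to a subset. -/
def IsConformalOn (g : α → α → α → ℝ) (ζ : α → α) (ρ : α → ℝ) (S : Set α) : Prop :=
  ∀ X Y : α → α, ContDiff ℝ (⊤ : ℕ∞) X → ContDiff ℝ (⊤ : ℕ∞) Y → ∀ p ∈ S,
    lieD g ζ X Y p = ρ p * g p (X p) (Y p)

/-- `ζ` is a Killing vector field for `g`. -/
def IsKilling (g : α → α → α → ℝ) (ζ : α → α) : Prop := IsConformal g ζ (fun _ => 0)

/-- Koszul characterization of the Levi-Civita connection of `g`. -/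
def IsLC (g : α → α → α → ℝ) (D : (α → α) → (α → α) → (α → α)) : Prop :=
  ∀ X Y Z : α → α, ContDiff ℝ (⊤ : ℕ∞) X → ContDiff ℝ (⊤ : ℕ∞) Y → ContDiff ℝ (⊤ : ℕ∞) Z → ∀ p,
    2 * g p (D X Y p) (Z p) =
      dd X (fun q => g q (Y q) (Z q)) p + dd Y (fun q => g q (X q) (Z q)) p
        - dd Z (fun q => g q (X q) (Y q)) p
        + g p (br X Y p) (Z p) - g p (br X Z p) (Y p) - g p (br Y Z p) (X p)

/-- Koszul characterization of the Levi-Civita connection, restricted to a subset. -/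
def IsLCOn (g : α → α → α → ℝ) (D : (α → α) → (α → α) → (α → α)) (S : Set α) : Prop :=
  ∀ X Y Z : α → α, ContDiff ℝ (⊤ : ℕ∞) X → ContDiff ℝ (⊤ : ℕ∞) Y → ContDiff ℝ (⊤ : ℕ∞) Z → ∀ p ∈ S,
    2 * g p (D X Y p) (Z p) =
      dd X (fun q => g q (Y q) (Z q)) p + dd Y (fun q => g q (X q) (Z q)) p
        - dd Z (fun q => g q (X q) (Y q)) p
        + g p (br X Y p) (Z p) - g p (br X Z p) (Y p) - g p (br Y Z p) (X p)

end Core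

section Warped
variable {n₁ n₂ : ℕ}

/-- The doubly warped product metric `g = f₂² g₁ ⊕ f₁² g₂` on `M₁ × M₂`. -/
def dwg (g₁ : E n₁ → E n₁ → E n₁ → ℝ) (g₂ : E n₂ → E n₂ → E n₂ → ℝ)
    (f₁ : E n₁ → ℝ) (f₂ : E n₂ → ℝ) :
    (E n₁ × E n₂) → (E n₁ × E n₂) → (E n₁ × E n₂) → ℝ :=
  fun p v w => (f₂ p.2)^2 * g₁ p.1 v.1 w.1 + (f₁ p.1)^2 * g₂ p.2 v.2 w.2

/-- Lift of a vector field on `M₁` to the product. -/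
def lift1 (ζ₁ : E n₁ → E n₁) : (E n₁ × E n₂) → (E n₁ × E n₂) := fun p => (ζ₁ p.1, 0)

/-- Lift of a vector field on `M₂` to the product. -/
def lift2 (ζ₂ : E n₂ → E n₂) : (E n₁ × E n₂) → (E n₁ × E n₂) := fun p => (0, ζ₂ p.2)

/-- The sum `ζ₁ + ζ₂` of lifted vector fields. -/
def sumVF (ζ₁ : E n₁ → E n₁) (ζ₂ : E n₂ → E n₂) : (E n₁ × E n₂) → (E n₁ × E n₂) :=
  fun p => (ζ₁ p.1, ζ₂ p.2)

end Warped

section AuxProof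

variable {β : Type*} [NormedAddCommGroup β] [NormedSpace ℝ β]

/-- Canonical basis vector of `E n`. -/
def bse (n : ℕ) (i : Fin n) : E n := fun j => if i = j then 1 else 0

lemma lin_apply_sum {n : ℕ} {φ : E n → ℝ} (hφ : IsLinearMap ℝ φ) (v : E n) :
    φ v = ∑ i, v i * φ (bse n i) := by
  conv_lhs => rw [pi_eq_sum_univ v]
  rw [show φ (∑ i, v i • fun j => if i = j then (1:ℝ) else 0)
      = IsLinearMap.mk' φ hφ (∑ i, v i • bse n i) from rfl, map_sum]
  simp [bse, smul_eq_mul]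

lemma metric_expand {n : ℕ} {g : E n → E n → E n → ℝ} (hg : IsMetric g)
    (p v w : E n) : g p v w = ∑ i, ∑ j, v i * w j * g p (bse n i) (bse n j) := by
  rw [lin_apply_sum (hg.linL p w) v]
  refine Finset.sum_congr rfl fun i _ => ?_
  rw [lin_apply_sum (hg.linR p (bse n i)) w, Finset.mul_sum]
  exact Finset.sum_congr rfl fun j _ => by ring

lemma hasFDerivAt_metric_comp {n : ℕ} {g : E n → E n → E n → ℝ} (hg : IsMetric g)
    (σ : β →L[ℝ] E n) {X Y : β → E n} {p : β}
    (hX : DifferentiableAt ℝ X p) (hY : DifferentiableAt ℝ Y p) :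
    HasFDerivAt (fun q => g (σ q) (X q) (Y q))
      (∑ i, ∑ j,
        ((X p i * Y p j) •
            ((fderiv ℝ (fun s => g s (bse n i) (bse n j)) (σ p)).comp σ)
          + g (σ p) (bse n i) (bse n j) •
            (X p i • ((ContinuousLinearMap.proj j).comp (fderiv ℝ Y p))
              + Y p j • ((ContinuousLinearMap.proj i).comp (fderiv ℝ X p))))) p := by
  have hfun : (fun q => g (σ q) (X q) (Y q))
      = fun q => ∑ i, ∑ j, X q i * Y q j * g (σ q) (bse n i) (bse n j) :=
    funext fun q => metric_expand hg _ _ _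
  rw [hfun]
  apply HasFDerivAt.fun_sum; intro i _
  apply HasFDerivAt.fun_sum; intro j _
  have hXi : HasFDerivAt (fun q => X q i)
      ((ContinuousLinearMap.proj i).comp (fderiv ℝ X p)) p := by
    simpa [Function.comp_def] using
      (ContinuousLinearMap.proj (R := ℝ) (φ := fun _ : Fin n => ℝ) i).hasFDerivAt.comp
        p hX.hasFDerivAt
  have hYj : HasFDerivAt (fun q => Y q j)
      ((ContinuousLinearMap.proj j).comp (fderiv ℝ Y p)) p := by
    simpa [Function.comp_def] using
      (ContinuousLinearMap.proj (R := ℝ) (φ := fun _ : Fin n => ℝ) j).hasFDerivAt.comp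
        p hY.hasFDerivAt
  have hc : HasFDerivAt (fun q => g (σ q) (bse n i) (bse n j))
      ((fderiv ℝ (fun s => g s (bse n i) (bse n j)) (σ p)).comp σ) p :=
    (((hg.smooth (bse n i) (bse n j)).differentiable (by simp) (σ p)).hasFDerivAt).comp
      p σ.hasFDerivAt
  exact (hXi.mul hYj).mul hc

lemma fderiv_metric_comp_apply {n : ℕ} {g : E n → E n → E n → ℝ} (hg : IsMetric g)
    (σ : β →L[ℝ] E n) {X Y : β → E n} {p : β}
    (hX : DifferentiableAt ℝ X p) (hY : DifferentiableAt ℝ Y p) (u : β) :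
    fderiv ℝ (fun q => g (σ q) (X q) (Y q)) p u
      = (∑ i, ∑ j, X p i * Y p j
            * fderiv ℝ (fun s => g s (bse n i) (bse n j)) (σ p) (σ u))
        + g (σ p) (fderiv ℝ X p u) (Y p) + g (σ p) (X p) (fderiv ℝ Y p u) := by
  rw [(hasFDerivAt_metric_comp hg σ hX hY).fderiv]
  rw [metric_expand hg (σ p) (fderiv ℝ X p u) (Y p),
      metric_expand hg (σ p) (X p) (fderiv ℝ Y p u)]
  simp only [ContinuousLinearMap.sum_apply, ContinuousLinearMap.add_apply,
    ContinuousLinearMap.smul_apply, ContinuousLinearMap.comp_apply,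
    ContinuousLinearMap.proj_apply, smul_eq_mul]
  rw [← Finset.sum_add_distrib, ← Finset.sum_add_distrib]
  refine Finset.sum_congr rfl fun i _ => ?_
  rw [← Finset.sum_add_distrib, ← Finset.sum_add_distrib]
  refine Finset.sum_congr rfl fun j _ => ?_
  ring

lemma fderiv_comp_fst' {γ₁ γ₂ : Type*} [NormedAddCommGroup γ₁] [NormedSpace ℝ γ₁]
    [NormedAddCommGroup γ₂] [NormedSpace ℝ γ₂] {X : β → γ₁ × γ₂} {p : β}
    (hX : DifferentiableAt ℝ X p) (u : β) :
    fderiv ℝ (fun q => (X q).1) p u = (fderiv ℝ X p u).1 := by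
  rw [(hX.hasFDerivAt.fst).fderiv]; rfl

lemma fderiv_comp_snd' {γ₁ γ₂ : Type*} [NormedAddCommGroup γ₁] [NormedSpace ℝ γ₁]
    [NormedAddCommGroup γ₂] [NormedSpace ℝ γ₂] {X : β → γ₁ × γ₂} {p : β}
    (hX : DifferentiableAt ℝ X p) (u : β) :
    fderiv ℝ (fun q => (X q).2) p u = (fderiv ℝ X p u).2 := by
  rw [(hX.hasFDerivAt.snd).fderiv]; rfl

lemma conformal_pointwise {n : ℕ} {g : E n → E n → E n → ℝ} (hg : IsMetric g)
    {ζ : E n → E n} {ρ : E n → ℝ} (hc : IsConformal g ζ ρ)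
    (p v w : E n) :
    (∑ i, ∑ j, v i * w j * fderiv ℝ (fun s => g s (bse n i) (bse n j)) p (ζ p))
      + g p (fderiv ℝ ζ p v) w + g p v (fderiv ℝ ζ p w) = ρ p * g p v w := by
  have h := hc (fun _ => v) (fun _ => w) contDiff_const contDiff_const p
  simp only [lieD, dd, br, fderiv_fun_const, Pi.zero_apply,
    ContinuousLinearMap.zero_apply, zero_sub, ContinuousLinearMap.neg_apply] at h
  have hf := fderiv_metric_comp_apply hg (ContinuousLinearMap.id ℝ (E n))
    (p := p) (differentiableAt_const v) (differentiableAt_const w) (ζ p)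
  simp only [ContinuousLinearMap.coe_id', id_eq, fderiv_fun_const, Pi.zero_apply,
    ContinuousLinearMap.zero_apply] at hf
  have hz1 : g p 0 w = 0 := (hg.linL p w).map_zero
  have hz2 : g p v 0 = 0 := (hg.linR p v).map_zero
  rw [hz1, hz2, add_zero, add_zero] at hf
  have hn1 : g p (-(fderiv ℝ ζ p v)) w = -(g p (fderiv ℝ ζ p v) w) :=
    (hg.linL p w).map_neg _
  have hn2 : g p v (-(fderiv ℝ ζ p w)) = -(g p v (fderiv ℝ ζ p w)) :=
    (hg.linR p v).map_neg _
  rw [hn1, hn2, hf] at h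
  linarith [h]

lemma dd_log {n : ℕ} {f : E n → ℝ} (hf : ContDiff ℝ (⊤ : ℕ∞) f) (hf0 : ∀ q, 0 < f q)
    (ζ : E n → E n) (p : E n) :
    dd ζ (fun q => Real.log (f q)) p = (f p)⁻¹ * fderiv ℝ f p (ζ p) := by
  unfold dd
  rw [(((hf.differentiable (by simp) p).hasFDerivAt).log (ne_of_gt (hf0 p))).fderiv]
  simp

end AuxProof

/-- If `ζᵢ` is conformal on `Mᵢ` with factor `ρᵢ` and
`ρ₁ − ρ₂ = 2[ζ₁(ln f₁) − ζ₂(ln f₂)]`, then `ζ₁ + ζ₂` is conformal on the doubly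
warped product with factor `ρ₁ + 2ζ₂(ln f₂)`. -/
theorem conformal_sum_conformal {n₁ n₂ : ℕ}
    (g₁ : E n₁ → E n₁ → E n₁ → ℝ) (g₂ : E n₂ → E n₂ → E n₂ → ℝ)
    (f₁ : E n₁ → ℝ) (f₂ : E n₂ → ℝ)
    (hg₁ : IsMetric g₁) (hg₂ : IsMetric g₂)
    (hg₁p : PosDef g₁) (hg₂p : PosDef g₂)
    (hf₁ : ContDiff ℝ (⊤ : ℕ∞) f₁) (hf₂ : ContDiff ℝ (⊤ : ℕ∞) f₂)
    (hf₁0 : ∀ q, 0 < f₁ q) (hf₂0 : ∀ q, 0 < f₂ q)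
    (ζ₁ : E n₁ → E n₁) (ζ₂ : E n₂ → E n₂)
    (hζ₁ : ContDiff ℝ (⊤ : ℕ∞) ζ₁) (hζ₂ : ContDiff ℝ (⊤ : ℕ∞) ζ₂)
    (ρ₁ : E n₁ → ℝ) (ρ₂ : E n₂ → ℝ)
    (hc₁ : IsConformal g₁ ζ₁ ρ₁) (hc₂ : IsConformal g₂ ζ₂ ρ₂)
    (hrel : ∀ p : E n₁ × E n₂,
      ρ₁ p.1 - ρ₂ p.2 =
        2 * (dd ζ₁ (fun q => Real.log (f₁ q)) p.1 - dd ζ₂ (fun q => Real.log (f₂ q)) p.2)) :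
    IsConformal (dwg g₁ g₂ f₁ f₂) (lift1 ζ₁ + lift2 ζ₂)
      (fun p => ρ₁ p.1 + 2 * dd ζ₂ (fun q => Real.log (f₂ q)) p.2) := by
  intro X Y hX hY p
  have hXd : DifferentiableAt ℝ X p := hX.differentiable (by simp) p
  have hYd : DifferentiableAt ℝ Y p := hY.differentiable (by simp) p
  have hX1 : DifferentiableAt ℝ (fun q : E n₁ × E n₂ => (X q).1) p := hXd.fst
  have hX2 : DifferentiableAt ℝ (fun q : E n₁ × E n₂ => (X q).2) p := hXd.snd
  have hY1 : DifferentiableAt ℝ (fun q : E n₁ × E n₂ => (Y q).1) p := hYd.fst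
  have hY2 : DifferentiableAt ℝ (fun q : E n₁ × E n₂ => (Y q).2) p := hYd.snd
  have hZ : (lift1 ζ₁ + lift2 (n₁ := n₁) ζ₂)
      = fun q : E n₁ × E n₂ => (ζ₁ q.1, ζ₂ q.2) := by
    funext q; simp [lift1, lift2, Prod.ext_iff]
  rw [hZ]
  -- derivative of the lifted vector field
  have hdζ₁ := (hζ₁.differentiable (by simp) p.1).hasFDerivAt
  have hdζ₂ := (hζ₂.differentiable (by simp) p.2).hasFDerivAt
  have hZh : HasFDerivAt (fun q : E n₁ × E n₂ => (ζ₁ q.1, ζ₂ q.2))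
      (((fderiv ℝ ζ₁ p.1).comp (ContinuousLinearMap.fst ℝ (E n₁) (E n₂))).prod
        ((fderiv ℝ ζ₂ p.2).comp (ContinuousLinearMap.snd ℝ (E n₁) (E n₂)))) p :=
    HasFDerivAt.prodMk (hdζ₁.comp p hasFDerivAt_fst) (hdζ₂.comp p hasFDerivAt_snd)
  have hZap : ∀ u : E n₁ × E n₂, fderiv ℝ (fun q : E n₁ × E n₂ => (ζ₁ q.1, ζ₂ q.2)) p u
      = (fderiv ℝ ζ₁ p.1 u.1, fderiv ℝ ζ₂ p.2 u.2) := fun u => by rw [hZh.fderiv]; rfl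
  -- derivatives of the two metric pieces
  have hΨ₁h := hasFDerivAt_metric_comp hg₁ (ContinuousLinearMap.fst ℝ (E n₁) (E n₂)) hX1 hY1
  have hΨ₂h := hasFDerivAt_metric_comp hg₂ (ContinuousLinearMap.snd ℝ (E n₁) (E n₂)) hX2 hY2
  have hΨ₁d : DifferentiableAt ℝ (fun q : E n₁ × E n₂ => g₁ q.1 (X q).1 (Y q).1) p :=
    hΨ₁h.differentiableAt
  have hΨ₂d : DifferentiableAt ℝ (fun q : E n₁ × E n₂ => g₂ q.2 (X q).2 (Y q).2) p :=
    hΨ₂h.differentiableAt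
  have hΨ₁ap : fderiv ℝ (fun q : E n₁ × E n₂ => g₁ q.1 (X q).1 (Y q).1) p
        ((ζ₁ p.1, ζ₂ p.2) : E n₁ × E n₂)
      = (∑ i, ∑ j, (X p).1 i * (Y p).1 j
            * fderiv ℝ (fun s => g₁ s (bse n₁ i) (bse n₁ j)) p.1 (ζ₁ p.1))
        + g₁ p.1 (fderiv ℝ X p (ζ₁ p.1, ζ₂ p.2)).1 (Y p).1
        + g₁ p.1 (X p).1 (fderiv ℝ Y p (ζ₁ p.1, ζ₂ p.2)).1 := by
    have h := fderiv_metric_comp_apply hg₁ (ContinuousLinearMap.fst ℝ (E n₁) (E n₂))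
      hX1 hY1 ((ζ₁ p.1, ζ₂ p.2))
    beta_reduce at h
    rw [fderiv_comp_fst' hXd, fderiv_comp_fst' hYd] at h
    exact h
  have hΨ₂ap : fderiv ℝ (fun q : E n₁ × E n₂ => g₂ q.2 (X q).2 (Y q).2) p
        ((ζ₁ p.1, ζ₂ p.2) : E n₁ × E n₂)
      = (∑ i, ∑ j, (X p).2 i * (Y p).2 j
            * fderiv ℝ (fun s => g₂ s (bse n₂ i) (bse n₂ j)) p.2 (ζ₂ p.2))
        + g₂ p.2 (fderiv ℝ X p (ζ₁ p.1, ζ₂ p.2)).2 (Y p).2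
        + g₂ p.2 (X p).2 (fderiv ℝ Y p (ζ₁ p.1, ζ₂ p.2)).2 := by
    have h := fderiv_metric_comp_apply hg₂ (ContinuousLinearMap.snd ℝ (E n₁) (E n₂))
      hX2 hY2 ((ζ₁ p.1, ζ₂ p.2))
    beta_reduce at h
    rw [fderiv_comp_snd' hXd, fderiv_comp_snd' hYd] at h
    exact h
  -- derivatives of the warping factors
  have hf₂h : HasFDerivAt (fun q : E n₁ × E n₂ => f₂ q.2)
      ((fderiv ℝ f₂ p.2).comp (ContinuousLinearMap.snd ℝ (E n₁) (E n₂))) p :=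
    ((hf₂.differentiable (by simp) p.2).hasFDerivAt).comp p hasFDerivAt_snd
  have hf₁h : HasFDerivAt (fun q : E n₁ × E n₂ => f₁ q.1)
      ((fderiv ℝ f₁ p.1).comp (ContinuousLinearMap.fst ℝ (E n₁) (E n₂))) p :=
    ((hf₁.differentiable (by simp) p.1).hasFDerivAt).comp p hasFDerivAt_fst
  have hsq₂ : HasFDerivAt (fun q : E n₁ × E n₂ => (f₂ q.2)^2)
      (f₂ p.2 • ((fderiv ℝ f₂ p.2).comp (ContinuousLinearMap.snd ℝ (E n₁) (E n₂)))
        + f₂ p.2 • ((fderiv ℝ f₂ p.2).comp (ContinuousLinearMap.snd ℝ (E n₁) (E n₂)))) p := by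
    simpa [pow_two, Pi.mul_def] using hf₂h.mul hf₂h
  have hsq₁ : HasFDerivAt (fun q : E n₁ × E n₂ => (f₁ q.1)^2)
      (f₁ p.1 • ((fderiv ℝ f₁ p.1).comp (ContinuousLinearMap.fst ℝ (E n₁) (E n₂)))
        + f₁ p.1 • ((fderiv ℝ f₁ p.1).comp (ContinuousLinearMap.fst ℝ (E n₁) (E n₂)))) p := by
    simpa [pow_two, Pi.mul_def] using hf₁h.mul hf₁h
  have hFh : HasFDerivAt
      (fun q : E n₁ × E n₂ =>
        (f₂ q.2)^2 * g₁ q.1 (X q).1 (Y q).1 + (f₁ q.1)^2 * g₂ q.2 (X q).2 (Y q).2)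
      (((f₂ p.2)^2 • fderiv ℝ (fun q : E n₁ × E n₂ => g₁ q.1 (X q).1 (Y q).1) p
          + g₁ p.1 (X p).1 (Y p).1 •
            (f₂ p.2 • ((fderiv ℝ f₂ p.2).comp (ContinuousLinearMap.snd ℝ (E n₁) (E n₂)))
              + f₂ p.2 • ((fderiv ℝ f₂ p.2).comp (ContinuousLinearMap.snd ℝ (E n₁) (E n₂)))))
        + ((f₁ p.1)^2 • fderiv ℝ (fun q : E n₁ × E n₂ => g₂ q.2 (X q).2 (Y q).2) p
          + g₂ p.2 (X p).2 (Y p).2 •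
            (f₁ p.1 • ((fderiv ℝ f₁ p.1).comp (ContinuousLinearMap.fst ℝ (E n₁) (E n₂)))
              + f₁ p.1 • ((fderiv ℝ f₁ p.1).comp (ContinuousLinearMap.fst ℝ (E n₁) (E n₂)))))) p :=
    (hsq₂.mul hΨ₁d.hasFDerivAt).add (hsq₁.mul hΨ₂d.hasFDerivAt)
  -- pointwise conformality
  have hP1 := conformal_pointwise hg₁ hc₁ p.1 (X p).1 (Y p).1
  have hP2 := conformal_pointwise hg₂ hc₂ p.2 (X p).2 (Y p).2
  -- the relation between the conformal factors
  have hrelp := hrel p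
  rw [dd_log hf₁ hf₁0 ζ₁ p.1, dd_log hf₂ hf₂0 ζ₂ p.2] at hrelp
  have hinv₁ : (f₁ p.1)⁻¹ * f₁ p.1 = 1 := inv_mul_cancel₀ (ne_of_gt (hf₁0 p.1))
  have hinv₂ : (f₂ p.2)⁻¹ * f₂ p.2 = 1 := inv_mul_cancel₀ (ne_of_gt (hf₂0 p.2))
  -- linearity helpers
  have hsubL₁ : ∀ a b : E n₁, g₁ p.1 (a - b) (Y p).1
      = g₁ p.1 a (Y p).1 - g₁ p.1 b (Y p).1 :=
    fun a b => (hg₁.linL p.1 (Y p).1).map_sub a b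
  have hsubL₂ : ∀ a b : E n₂, g₂ p.2 (a - b) (Y p).2
      = g₂ p.2 a (Y p).2 - g₂ p.2 b (Y p).2 :=
    fun a b => (hg₂.linL p.2 (Y p).2).map_sub a b
  have hsubR₁ : ∀ a b : E n₁, g₁ p.1 (X p).1 (a - b)
      = g₁ p.1 (X p).1 a - g₁ p.1 (X p).1 b :=
    fun a b => (hg₁.linR p.1 (X p).1).map_sub a b
  have hsubR₂ : ∀ a b : E n₂, g₂ p.2 (X p).2 (a - b)
      = g₂ p.2 (X p).2 a - g₂ p.2 (X p).2 b :=
    fun a b => (hg₂.linR p.2 (X p).2).map_sub a b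
  -- unfold everything
  have hlog₂ : fderiv ℝ (fun q => Real.log (f₂ q)) p.2 (ζ₂ p.2)
      = (f₂ p.2)⁻¹ * fderiv ℝ f₂ p.2 (ζ₂ p.2) := dd_log hf₂ hf₂0 ζ₂ p.2
  simp only [lieD, dd, br, dwg]
  rw [hlog₂]
  rw [hFh.fderiv]
  rw [hZap (X p), hZap (Y p)]
  simp only [ContinuousLinearMap.add_apply, ContinuousLinearMap.smul_apply,
    ContinuousLinearMap.comp_apply, ContinuousLinearMap.coe_snd', ContinuousLinearMap.coe_fst',
    smul_eq_mul, Prod.fst_sub, Prod.snd_sub]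
  rw [hΨ₁ap, hΨ₂ap, hsubL₁, hsubL₂, hsubR₁, hsubR₂]
  linear_combination ((f₂ p.2)^2) * hP1 + ((f₁ p.1)^2) * hP2
    + (-((f₁ p.1)^2 * g₂ p.2 (X p).2 (Y p).2)) * hrelp
    + (-(2 * f₂ p.2 * fderiv ℝ f₂ p.2 (ζ₂ p.2) * g₁ p.1 (X p).1 (Y p).1)) * hinv₂
    + (-(2 * f₁ p.1 * fderiv ℝ f₁ p.1 (ζ₁ p.1) * g₂ p.2 (X p).2 (Y p).2)) * hinv₁
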